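/- For symmetric N×N real matrices A and B, the Lévy distance between the empirical spectral distributions of A and B is at most rank(A-B)/N. -/

import Mathlib

/-!
Let `V` be spanned by the eigenvectors of `A` with eigenvalue `≤ x` and `W` by those of `B` with
eigenvalue `> x`. A nonzero `v ∈ V ∩ W ∩ ker (A - B)` would satisfy
`⟪v, A v⟫ ≤ x ‖v‖² < ⟪v, B v⟫ = ⟪v, A v⟫`, so this intersection is trivial and counting dimensions
gives `N F_A(x) ≤ N F_B(x) + rank (A - B)`. A uniform bound `|F_A - F_B| ≤ r` between a monotone
`F_A` and `F_B` already bounds their Lévy distance by `r`.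
-/

open Classical in
/-- The cumulative distribution function of the empirical spectral distribution of a
symmetric (= Hermitian, over `ℝ`) real matrix: mass `1/N` at each eigenvalue. -/
noncomputable def esdCDF {N : ℕ} {A : Matrix (Fin N) (Fin N) ℝ}
    (hA : A.IsHermitian) : ℝ → ℝ :=
  fun x => ((Finset.univ.filter fun i => hA.eigenvalues i ≤ x).card : ℝ) / N

/-- The Lévy distance between two cumulative distribution functions:
`inf {ε > 0 : F(x-ε) - ε ≤ G(x) ≤ F(x+ε) + ε for all x}`. -/
noncomputable def levyDist (F G : ℝ → ℝ) : ℝ :=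
  sInf {ε : ℝ | 0 < ε ∧ ∀ x, F (x - ε) - ε ≤ G x ∧ G x ≤ F (x + ε) + ε}

open Finset Module Submodule
open scoped RealInnerProductSpace

theorem Submodule.finrank_add_finrank_add_finrank_le {K V : Type*} [DivisionRing K]
    [AddCommGroup V] [Module K V] [FiniteDimensional K V] {U₁ U₂ U₃ : Submodule K V}
    (h : Disjoint (U₁ ⊓ U₂) U₃) :
    finrank K U₁ + finrank K U₂ + finrank K U₃ ≤ 2 * finrank K V := by
  have h₁₂ := finrank_sup_add_finrank_inf_eq U₁ U₂
  have h₁₂₃ := finrank_add_finrank_le_of_disjoint h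
  have := (U₁ ⊔ U₂).finrank_le
  omega

namespace OrthonormalBasis

section

variable {𝕜 E ι : Type*} [RCLike 𝕜] [NormedAddCommGroup E] [InnerProductSpace 𝕜 E] [Fintype ι]
  (b : OrthonormalBasis ι 𝕜 E)

theorem finrank_span_image (s : Finset ι) : finrank 𝕜 (span 𝕜 (b '' s)) = #s := by
  rw [Set.image_eq_range]
  exact (finrank_span_eq_card (b.orthonormal.linearIndependent.comp _ Subtype.val_injective)).trans
    (Fintype.card_coe s)

theorem inner_eq_zero_of_mem_span_image {s : Set ι} {v : E} (hv : v ∈ span 𝕜 (b '' s)) {i : ι}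
    (hi : i ∉ s) : inner 𝕜 (b i) v = 0 := by
  have hspan : span 𝕜 (b '' s) ≤ (𝕜 ∙ b i)ᗮ := span_le.mpr <| by
    rintro _ ⟨j, hj, rfl⟩
    exact mem_orthogonal_singleton_iff_inner_right.mpr
      (b.orthonormal.2 (ne_of_mem_of_not_mem hj hi).symm)
  exact mem_orthogonal_singleton_iff_inner_right.mp (hspan hv)

end

variable {E ι : Type*} [NormedAddCommGroup E] [InnerProductSpace ℝ E] [Fintype ι]
  (b : OrthonormalBasis ι ℝ E) {d : ι → ℝ} {T : E →ₗ[ℝ] E}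

theorem inner_apply_self_eq_sum (hT : ∀ i, T (b i) = d i • b i) (v : E) :
    ⟪v, T v⟫ = ∑ i, d i * ⟪b i, v⟫ ^ 2 := by
  have hTv : T v = ∑ i, (⟪b i, v⟫ * d i) • b i := by
    conv_lhs => rw [← b.sum_repr' v]
    simp only [map_sum, map_smul, hT, smul_smul]
  rw [hTv, inner_sum]
  refine sum_congr rfl fun i _ => ?_
  rw [real_inner_smul_right, real_inner_comm]
  ring

theorem inner_apply_self_le_of_mem_span {s : Set ι} {x : ℝ} (hT : ∀ i, T (b i) = d i • b i)
    (hs : ∀ i ∈ s, d i ≤ x) {v : E} (hv : v ∈ span ℝ (b '' s)) :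
    ⟪v, T v⟫ ≤ x * ‖v‖ ^ 2 := by
  rw [b.inner_apply_self_eq_sum hT, ← b.sum_sq_inner_right, mul_sum]
  refine sum_le_sum fun i _ => ?_
  by_cases hi : i ∈ s
  · exact mul_le_mul_of_nonneg_right (hs i hi) (sq_nonneg _)
  · simp [b.inner_eq_zero_of_mem_span_image hv hi]

theorem lt_inner_apply_self_of_mem_span {s : Set ι} {x : ℝ} (hT : ∀ i, T (b i) = d i • b i)
    (hs : ∀ i ∈ s, x < d i) {v : E} (hv : v ∈ span ℝ (b '' s)) (hv₀ : v ≠ 0) :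
    x * ‖v‖ ^ 2 < ⟪v, T v⟫ := by
  rw [b.inner_apply_self_eq_sum hT, ← b.sum_sq_inner_right, mul_sum]
  obtain ⟨i₀, hi₀⟩ : ∃ i, ⟪b i, v⟫ ≠ 0 := by
    by_contra! h
    exact hv₀ (by simpa [h] using (b.sum_repr' v).symm)
  have hi₀s : i₀ ∈ s := by
    by_contra h
    exact hi₀ (b.inner_eq_zero_of_mem_span_image hv h)
  refine sum_lt_sum (fun i _ => ?_) ⟨i₀, mem_univ _, ?_⟩
  · by_cases hi : i ∈ s
    · exact mul_le_mul_of_nonneg_right (hs i hi).le (sq_nonneg _)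
    · simp [b.inner_eq_zero_of_mem_span_image hv hi]
  · exact mul_lt_mul_of_pos_right (hs i₀ hi₀s) (sq_pos_of_ne_zero hi₀)

end OrthonormalBasis

theorem card_le_card_add_finrank_range_sub {E ι κ : Type*} [NormedAddCommGroup E]
    [InnerProductSpace ℝ E] [Fintype ι] [Fintype κ] (b : OrthonormalBasis ι ℝ E)
    (c : OrthonormalBasis κ ℝ E) {d : ι → ℝ} {e : κ → ℝ} {T S : E →ₗ[ℝ] E}
    (hT : ∀ i, T (b i) = d i • b i) (hS : ∀ j, S (c j) = e j • c j) (x : ℝ) :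
    #{i | d i ≤ x} ≤ #{j | e j ≤ x} + finrank ℝ (LinearMap.range (T - S)) := by
  have := Module.Finite.of_basis b.toBasis
  set V := span ℝ (b '' ↑(univ.filter fun i => d i ≤ x))
  set W := span ℝ (c '' ↑(univ.filter fun j => ¬ e j ≤ x))
  have hdisj : Disjoint (V ⊓ W) (LinearMap.ker (T - S)) := by
    refine disjoint_def.mpr fun v ⟨hvV, hvW⟩ hvK => ?_
    by_contra hv₀
    have hTS : T v = S v := sub_eq_zero.mp hvK
    have hle := b.inner_apply_self_le_of_mem_span hT (fun i hi => (mem_filter.mp hi).2) hvV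
    have hlt := c.lt_inner_apply_self_of_mem_span hS
      (fun j hj => not_le.mp (mem_filter.mp hj).2) hvW hv₀
    rw [hTS] at hle
    linarith
  have hdim := finrank_add_finrank_add_finrank_le hdisj
  have hrank := LinearMap.finrank_range_add_finrank_ker (T - S)
  have hcard : #{j | e j ≤ x} + #{j | ¬ e j ≤ x} = finrank ℝ E := by
    rw [card_filter_add_card_filter_not, card_univ, finrank_eq_card_basis c.toBasis]
  rw [b.finrank_span_image, c.finrank_span_image] at hdim
  omega

theorem Matrix.IsHermitian.toEuclideanLin_eigenvectorBasis {n : Type*} [Fintype n]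
    [DecidableEq n] {A : Matrix n n ℝ} (hA : A.IsHermitian) (i : n) :
    toEuclideanLin A (hA.eigenvectorBasis i) = hA.eigenvalues i • hA.eigenvectorBasis i := by
  rw [toLpLin_apply, hA.mulVec_eigenvectorBasis]
  rfl

theorem Matrix.rank_eq_finrank_range_toEuclideanLin {𝕜 m n : Type*} [RCLike 𝕜] [Fintype m]
    [Fintype n] [DecidableEq n] (M : Matrix m n 𝕜) :
    M.rank = finrank 𝕜 (LinearMap.range (toEuclideanLin M)) :=
  M.rank_eq_finrank_range_toLin (PiLp.basisFun _ _ _) (PiLp.basisFun _ _ _)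

theorem Matrix.rank_sub_comm {R m n : Type*} [CommRing R] [Fintype n] (A B : Matrix m n R) :
    (A - B).rank = (B - A).rank := by
  classical
  rw [rank, rank, ← toLin'_apply', ← toLin'_apply', ← neg_sub, map_neg, LinearMap.range_neg]

theorem Matrix.IsHermitian.card_eigenvalues_le_le_card_add_rank {n : Type*} [Fintype n]
    [DecidableEq n] {A B : Matrix n n ℝ} (hA : A.IsHermitian) (hB : B.IsHermitian) (x : ℝ) :
    #{i | hA.eigenvalues i ≤ x} ≤ #{i | hB.eigenvalues i ≤ x} + (A - B).rank := by
  rw [rank_eq_finrank_range_toEuclideanLin, map_sub]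
  exact card_le_card_add_finrank_range_sub _ _ hA.toEuclideanLin_eigenvectorBasis
    hB.toEuclideanLin_eigenvectorBasis x

theorem esdCDF_monotone {N : ℕ} {A : Matrix (Fin N) (Fin N) ℝ} (hA : A.IsHermitian) :
    Monotone (esdCDF hA) := by
  intro x y hxy
  unfold esdCDF
  gcongr

theorem esdCDF_le_add_rank {N : ℕ} {A B : Matrix (Fin N) (Fin N) ℝ} (hA : A.IsHermitian)
    (hB : B.IsHermitian) (x : ℝ) : esdCDF hA x ≤ esdCDF hB x + (A - B).rank / N := by
  unfold esdCDF
  rw [← add_div]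
  gcongr
  exact_mod_cast hA.card_eigenvalues_le_le_card_add_rank hB x

theorem levyDist_le_of_forall_le_add {F G : ℝ → ℝ} (hF : Monotone F) {r : ℝ} (hr : 0 ≤ r)
    (hFG : ∀ x, F x ≤ G x + r) (hGF : ∀ x, G x ≤ F x + r) : levyDist F G ≤ r := by
  refine le_of_forall_gt_imp_ge_of_dense fun ε hε =>
    csInf_le ⟨0, fun _ h => h.1.le⟩ ⟨hr.trans_lt hε, fun x => ⟨?_, ?_⟩⟩
  · linarith [hF (show x - ε ≤ x by linarith), hFG x]
  · linarith [hF (show x ≤ x + ε by linarith), hGF x]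

theorem hadamard_stmt6_general {N : ℕ}
    (A B : Matrix (Fin N) (Fin N) ℝ)
    (hA : A.IsHermitian) (hB : B.IsHermitian) :
    levyDist (esdCDF hA) (esdCDF hB) ≤ ((A - B).rank : ℝ) / N := by
  refine levyDist_le_of_forall_le_add (esdCDF_monotone hA) (by positivity)
    (esdCDF_le_add_rank hA hB) fun x => ?_
  rw [Matrix.rank_sub_comm]
  exact esdCDF_le_add_rank hB hA x

/-- For symmetric `N×N` real matrices `A` and `B`, the Lévy distance between the
empirical spectral distributions of `A` and `B` is at most `rank(A-B)/N`. -/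
theorem hadamard_stmt6 {N : ℕ} (hN : 0 < N)
    (A B : Matrix (Fin N) (Fin N) ℝ)
    (hA : A.IsHermitian) (hB : B.IsHermitian) :
    levyDist (esdCDF hA) (esdCDF hB) ≤ ((A - B).rank : ℝ) / N :=
  hadamard_stmt6_general A B hA hB
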